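/- arXiv:1903.00623 — 2 statements merged into one kernel-verified Lean document; each statement's English description precedes it below -/
import Mathlib

section
/- Let $T$ be the vector space spanned by symbols $\Xi$ and $(k\dots n)\Xi$ for $k = 1,\dots,n$, and let $\mathcal{W}^{<1}$ be the word Hopf algebra on alphabets $\{1,\dots,n\}$. Define $\Delta: T \to T \otimes \mathcal{W}^{<1}$ by $\Delta\Xi = \Xi \otimes \mathbf{1}$ and $\Delta(k\dots n)\Xi = \sum_{\ell=k-1}^{n} ((\ell+1)\dots n)\Xi \otimes (k\dots\ell)$. Then $(T,\Delta)$ satisfies the right comodule property: $(\Delta \otimes \mathrm{Id})\Delta = (\mathrm{Id} \otimes \Delta^+)\Delta$ as maps $T \to T \otimes \mathcal{W}^{<1} \otimes \mathcal{W}^{<1}$, where $\Delta^+$ is the deconcatenation coproduct on $\mathcal{W}^{<1}$. -/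
noncomputable section

open TensorProduct

/-- Nonempty words over the alphabet `S`. -/
abbrev Wrd (S : Type) := {l : List S // l ≠ []}

/-- The word Hopf algebra `ℝ[W]`: the free commutative `ℝ`-algebra generated by the
nonempty words over `S` (the empty word being the algebra unit `1`). -/
abbrev WAlg (S : Type) := MvPolynomial (Wrd S) ℝ

/-- A word, viewed as an element of `WAlg S`; the empty word is the unit `1`. -/
def emb {S : Type} : List S → WAlg S
  | [] => 1
  | a :: l => MvPolynomial.X ⟨a :: l, by simp⟩

/-- The deconcatenation coproduct `Δ(i₁…i_k) = ∑_{ℓ=0}^{k} (i_{ℓ+1}…i_k) ⊗ (i₁…i_ℓ)`,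
extended to `WAlg S` as an algebra homomorphism. -/
def coprod (S : Type) : WAlg S →ₐ[ℝ] (WAlg S ⊗[ℝ] WAlg S) :=
  MvPolynomial.aeval fun w : Wrd S =>
    ∑ ℓ ∈ Finset.range (w.val.length + 1),
      (emb (w.val.drop ℓ) ⊗ₜ[ℝ] emb (w.val.take ℓ) : WAlg S ⊗[ℝ] WAlg S)

/-- The counit `𝟏*`, sending the empty word to `1` and every nonempty word to `0`. -/
def counit (S : Type) : WAlg S →ₐ[ℝ] ℝ :=
  MvPolynomial.aeval fun _ : Wrd S => (0 : ℝ)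

/-- Convolution product of characters: `f * g := (f ⊗ g) ∘ Δ`. -/
def convMul {S : Type} (f g : WAlg S →ₐ[ℝ] ℝ) : WAlg S →ₐ[ℝ] ℝ :=
  (Algebra.TensorProduct.productMap f g).comp (coprod S)

end

open TensorProduct

noncomputable section

/-- The word with (0-based) letters `j, j+1, …, ℓ-1` over the alphabet `Fin n`
(the 1-based word `(j+1 … ℓ)` of the paper; empty when `ℓ ≤ j`). -/
def wordSeg (n : ℕ) (j ℓ : ℕ) : List (Fin n) := (((List.finRange n).drop j).take (ℓ - j))

/-- The module `T` spanned by the symbols `((j+1)…n)Ξ`, `j = 0,…,n`; the index `j = n`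
corresponds to the symbol `Ξ` itself. -/
abbrev TXi (n : ℕ) := Fin (n + 1) → ℝ

/-- The comodule coproduct `Δ : T → T ⊗ 𝒲^{<1}`,
`Δ((k…n)Ξ) = ∑_{ℓ=k-1}^{n} ((ℓ+1)…n)Ξ ⊗ (k…ℓ)` and `ΔΞ = Ξ ⊗ 𝟏`. -/
def coact (n : ℕ) : TXi n →ₗ[ℝ] (TXi n ⊗[ℝ] WAlg (Fin n)) :=
  (Pi.basisFun ℝ (Fin (n + 1))).constr ℝ fun j : Fin (n + 1) =>
    ∑ ℓ : Fin (n + 1), if (j : ℕ) ≤ (ℓ : ℕ) then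
      (Pi.single ℓ (1 : ℝ) : TXi n) ⊗ₜ[ℝ] emb (wordSeg n (j : ℕ) (ℓ : ℕ))
    else 0


lemma coprod_emb {S : Type} (w : List S) :
    coprod S (emb w) = ∑ m ∈ Finset.range (w.length + 1),
      emb (w.drop m) ⊗ₜ[ℝ] emb (w.take m) := by
  match w with
  | [] => simp [emb, Algebra.TensorProduct.one_def]
  | a :: l => simp [emb, coprod]

lemma wordSeg_length (n j ℓ : ℕ) (hℓ : ℓ ≤ n) (hj : j ≤ ℓ) :
    (wordSeg n j ℓ).length = ℓ - j := by
  simp [wordSeg]; omega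

lemma wordSeg_drop (n j ℓ m : ℕ) :
    (wordSeg n j ℓ).drop m = wordSeg n (j + m) ℓ := by
  unfold wordSeg
  rw [List.drop_take, List.drop_drop]
  congr 1
  omega

lemma wordSeg_take (n j ℓ m : ℕ) (hm : m ≤ ℓ - j) :
    (wordSeg n j ℓ).take m = wordSeg n j (j + m) := by
  unfold wordSeg
  rw [List.take_take]
  congr 1
  omega

lemma coact_single (n : ℕ) (j : Fin (n + 1)) :
    coact n (Pi.single j 1) =
      ∑ ℓ : Fin (n + 1), if (j : ℕ) ≤ (ℓ : ℕ) then
        (Pi.single ℓ (1 : ℝ) : TXi n) ⊗ₜ[ℝ] emb (wordSeg n (j : ℕ) (ℓ : ℕ))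
      else 0 := by
  rw [show (Pi.single j 1 : TXi n) = Pi.basisFun ℝ (Fin (n + 1)) j from
    (Pi.basisFun_apply ℝ _ j).symm]
  exact Module.Basis.constr_basis _ _ _ _

lemma key_reindex {M : Type*} [AddCommMonoid M] (n j ℓ : ℕ) (hℓ : ℓ ≤ n) (hj : j ≤ ℓ)
    (f : ℕ → M) :
    (∑ k : Fin (n + 1), if j ≤ (k : ℕ) ∧ (k : ℕ) ≤ ℓ then f (k : ℕ) else 0) =
      ∑ m ∈ Finset.range (ℓ - j + 1), f (j + m) := by
  rw [Fin.sum_univ_eq_sum_range (fun k => if j ≤ k ∧ k ≤ ℓ then f k else 0) (n + 1),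
    ← Finset.sum_filter]
  refine Finset.sum_nbij' (fun k => k - j) (fun m => j + m) ?_ ?_ ?_ ?_ ?_
  · intro k hk; simp only [Finset.mem_filter, Finset.mem_range] at hk ⊢; omega
  · intro m hm; simp only [Finset.mem_filter, Finset.mem_range] at hm ⊢; omega
  · intro k hk; simp only [Finset.mem_filter, Finset.mem_range] at hk; omega
  · intro m hm; rw [Finset.mem_range] at hm; omega
  · intro k hk; simp only [Finset.mem_filter, Finset.mem_range] at hk
    congr 1; omega

set_option synthInstance.maxHeartbeats 1000000 in
set_option maxHeartbeats 1000000 in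
/-- The right comodule property for `T` over the word Hopf algebra:
`(Δ ⊗ Id)Δ = (Id ⊗ Δ⁺)Δ` as maps `T → T ⊗ 𝒲^{<1} ⊗ 𝒲^{<1}`. -/
theorem coact_comodule (n : ℕ) :
    (TensorProduct.map (LinearMap.id : TXi n →ₗ[ℝ] TXi n)
          (coprod (Fin n)).toLinearMap).comp (coact n) =
      ((TensorProduct.assoc ℝ (TXi n) (WAlg (Fin n)) (WAlg (Fin n))).toLinearMap.comp
        ((TensorProduct.map (coact n)
          (LinearMap.id : WAlg (Fin n) →ₗ[ℝ] WAlg (Fin n))).comp (coact n))) := by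
  apply (Pi.basisFun ℝ (Fin (n + 1))).ext
  intro j
  simp only [LinearMap.comp_apply, LinearEquiv.coe_coe, Pi.basisFun_apply]
  rw [coact_single]
  rw [map_sum (TensorProduct.map (LinearMap.id : TXi n →ₗ[ℝ] TXi n)
        (coprod (Fin n)).toLinearMap) _ Finset.univ,
    map_sum (TensorProduct.map (coact n)
        (LinearMap.id : WAlg (Fin n) →ₗ[ℝ] WAlg (Fin n))) _ Finset.univ,
    map_sum (TensorProduct.assoc ℝ (TXi n) (WAlg (Fin n)) (WAlg (Fin n))) _ Finset.univ]
  have hRHS : ∀ ℓ : Fin (n + 1),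
      (TensorProduct.assoc ℝ (TXi n) (WAlg (Fin n)) (WAlg (Fin n)))
        ((TensorProduct.map (coact n) LinearMap.id)
          (if (j : ℕ) ≤ (ℓ : ℕ) then
            (Pi.single ℓ (1 : ℝ) : TXi n) ⊗ₜ[ℝ] emb (wordSeg n (j : ℕ) (ℓ : ℕ)) else 0)) =
      ∑ k : Fin (n + 1), if (j : ℕ) ≤ (ℓ : ℕ) ∧ (ℓ : ℕ) ≤ (k : ℕ) then
        (Pi.single k (1 : ℝ) : TXi n) ⊗ₜ[ℝ]
          (emb (wordSeg n (ℓ : ℕ) (k : ℕ)) ⊗ₜ[ℝ] emb (wordSeg n (j : ℕ) (ℓ : ℕ))) else 0 := by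
    intro ℓ
    by_cases h : (j : ℕ) ≤ (ℓ : ℕ)
    · simp only [h, if_true, true_and, TensorProduct.map_tmul, LinearMap.id_coe, id_eq,
        coact_single, TensorProduct.sum_tmul, map_sum]
      refine Finset.sum_congr rfl fun k _ => ?_
      by_cases h2 : (ℓ : ℕ) ≤ (k : ℕ)
      · simp [h2]
      · simp [h2]
    · simp [h]
  rw [Finset.sum_congr rfl fun ℓ _ => hRHS ℓ]
  have hLHS : ∀ ℓ : Fin (n + 1),
      (TensorProduct.map LinearMap.id (coprod (Fin n)).toLinearMap)
        (if (j : ℕ) ≤ (ℓ : ℕ) then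
          (Pi.single ℓ (1 : ℝ) : TXi n) ⊗ₜ[ℝ] emb (wordSeg n (j : ℕ) (ℓ : ℕ)) else 0) =
      ∑ k : Fin (n + 1), if (j : ℕ) ≤ (k : ℕ) ∧ (k : ℕ) ≤ (ℓ : ℕ) then
        (Pi.single ℓ (1 : ℝ) : TXi n) ⊗ₜ[ℝ]
          (emb (wordSeg n (k : ℕ) (ℓ : ℕ)) ⊗ₜ[ℝ] emb (wordSeg n (j : ℕ) (k : ℕ))) else 0 := by
    intro ℓ
    by_cases h : (j : ℕ) ≤ (ℓ : ℕ)
    · have hℓn : (ℓ : ℕ) ≤ n := Nat.lt_succ_iff.mp ℓ.isLt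
      simp only [h, if_true, TensorProduct.map_tmul, LinearMap.id_coe, id_eq,
        AlgHom.toLinearMap_apply, coprod_emb, wordSeg_length n (j : ℕ) (ℓ : ℕ) hℓn h,
        TensorProduct.tmul_sum]
      rw [key_reindex n (j : ℕ) (ℓ : ℕ) hℓn h
        (fun k => (Pi.single ℓ (1 : ℝ) : TXi n) ⊗ₜ[ℝ]
          (emb (wordSeg n k (ℓ : ℕ)) ⊗ₜ[ℝ] emb (wordSeg n (j : ℕ) k)))]
      refine Finset.sum_congr rfl fun m hm => ?_
      rw [Finset.mem_range] at hm
      rw [wordSeg_drop, wordSeg_take n (j : ℕ) (ℓ : ℕ) m (by omega)]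
    · rw [if_neg h, map_zero]
      exact (Finset.sum_eq_zero fun k _ => if_neg (by omega)).symm
  rw [Finset.sum_congr rfl fun ℓ _ => hLHS ℓ]
  rw [Finset.sum_comm]


end
end

section
/- Let $f_i \in \mathcal{C}^{\alpha_i}$ with $\alpha_i \in (0,1)$. Define the modified iterated products $(f^i)_j := \Delta_j f_i$ and $(f^{i_1\dots i_k})_j := \big(\sum_{m < j-1}(f^{i_1\dots i_{k-1}})_m\big)\,\Delta_j f_{i_k}$. Then $\|(f^{i_1\dots i_k})_j\|_{L^\infty} \lesssim 2^{-j\alpha_{i_k}} \|f_{i_1}\|_{\alpha_{i_1}}\cdots\|f_{i_k}\|_{\alpha_{i_k}}$, so the series $f^{i_1\dots i_k} = \sum_j (f^{i_1\dots i_k})_j$ converges absolutely in $L^\infty$. -/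
noncomputable section

open MeasureTheory

/-- `d`-dimensional Euclidean space. -/
abbrev Ed (d : ℕ) := EuclideanSpace ℝ (Fin d)

/-- A dyadic Littlewood–Paley partition of unity `(χ, ρ)` on `ℝ^d`. -/
structure LPPartition (d : ℕ) where
  chi : Ed d → ℝ
  rho : Ed d → ℝ
  smooth_chi : ContDiff ℝ (⊤ : ℕ∞) chi
  smooth_rho : ContDiff ℝ (⊤ : ℕ∞) rho
  supp_chi : ∀ x : Ed d, (4 / 3 : ℝ) ≤ ‖x‖ → chi x = 0
  supp_rho : ∀ x : Ed d, ‖x‖ ≤ (3 / 4 : ℝ) ∨ (8 / 3 : ℝ) ≤ ‖x‖ → rho x = 0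
  partition : ∀ x : Ed d, chi x + ∑' j : ℕ, rho (((2 : ℝ) ^ j)⁻¹ • x) = 1

/-- The Fourier symbol of the `n`-th Littlewood–Paley block; the index `n : ℕ`
corresponds to the usual index `j = n - 1 ≥ -1`, so `n = 0` is the block `Δ_{-1}`
given by `χ` and `n = j + 1` is the block `Δ_j` given by `ρ(2^{-j}·)` for `j ≥ 0`. -/
def lpSymbol {d : ℕ} (P : LPPartition d) : ℕ → Ed d → ℝ
  | 0 => P.chi
  | n + 1 => fun x => P.rho (((2 : ℝ) ^ n)⁻¹ • x)

/-- The Littlewood–Paley block `Δ_{n-1} f = ℱ⁻¹(ρ_{n-1} ℱ f)`, realized as the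
convolution of `f` with the inverse Fourier transform of the symbol. -/
def lpBlock {d : ℕ} (P : LPPartition d) (n : ℕ) (f : Ed d → ℝ) (x : Ed d) : ℝ :=
  (∫ y : Ed d,
    (FourierTransformInv.fourierInv (fun v => (lpSymbol P n v : ℂ)) : Ed d → ℂ) y * (f (x - y) : ℂ)).re

/-- `f` has `𝒞^α = B^α_{∞,∞}` Besov norm bounded by `M`:
`2^{jα} ‖Δ_j f‖_{L^∞} ≤ M` for all `j ≥ -1` (here `j = n - 1`). -/
def HolderBdd {d : ℕ} (P : LPPartition d) (α : ℝ) (f : Ed d → ℝ) (M : ℝ) : Prop :=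
  ∀ (n : ℕ) (x : Ed d), (2 : ℝ) ^ (((n : ℝ) - 1) * α) * |lpBlock P n f x| ≤ M

/-- `f` is the sum of its Littlewood–Paley blocks (pointwise). -/
def LPSum {d : ℕ} (P : LPPartition d) (f : Ed d → ℝ) : Prop :=
  ∀ x : Ed d, HasSum (fun n : ℕ => lpBlock P n f x) (f x)

/-- The Bony paraproduct `f ≺ g = ∑_{j < k - 1} Δ_j f Δ_k g`. -/
def para {d : ℕ} (P : LPPartition d) (f g : Ed d → ℝ) : Ed d → ℝ := fun x =>
  ∑' k : ℕ, (∑ m ∈ Finset.range (k - 1), lpBlock P m f x) * lpBlock P k g x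

/-- The iterated paraproduct `(f₁, …, f_n)^≺ = (f₁, …, f_{n-1})^≺ ≺ f_n`. -/
def iterPara {d : ℕ} (P : LPPartition d) : List (Ed d → ℝ) → Ed d → ℝ
  | [] => fun _ => 0
  | f :: fs => fs.foldl (para P) f

/-- The coherence remainder `ω_{yx}` associated with a family `F` of functions indexed
by words: `ω_{yx}(l) = F l (y) - F l (x) - ∑_{ℓ=1}^{k-1} F(l₁…l_ℓ)(x) ω_{yx}(l_{ℓ+1}…l_k)`,
defined by recursion on the length of the word (the first argument is the length). -/
def omGen {d : ℕ} {β : Type*} (F : List β → Ed d → ℝ) :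
    ℕ → List β → Ed d → Ed d → ℝ
  | 0, _, _, _ => 0
  | n + 1, l, y, x =>
      F l y - F l x -
        ∑ ℓ ∈ Finset.range n, F (l.take (ℓ + 1)) x * omGen F (n - ℓ) (l.drop (ℓ + 1)) y x
  termination_by n => n
  decreasing_by omega

end

/-- The blocks `(f^{i₁…i_k})_j` of the modified iterated products, for a word given as
a list in *reversed* order `[f_{i_k}, …, f_{i₁}]`:
`(f^{i})_j = Δ_j f_i` and `(f^{i₁…i_k})_j = (∑_{m<j-1} (f^{i₁…i_{k-1}})_m) Δ_j f_{i_k}`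
(the index `n : ℕ` corresponds to `j = n - 1 ≥ -1`). -/
noncomputable def revModBlock {d : ℕ} (P : LPPartition d) :
    List (Ed d → ℝ) → ℕ → Ed d → ℝ
  | [], _, _ => 0
  | [f], n, x => lpBlock P n f x
  | f :: g :: rest, n, x =>
      (∑ m ∈ Finset.range (n - 1), revModBlock P (g :: rest) m x) * lpBlock P n f x

private lemma geom_block_sum (b : ℝ) (hb : 0 < b) (N : ℕ) :
    ∑ m ∈ Finset.range N, (2:ℝ) ^ (-((m:ℝ)-1)*b) ≤ (2:ℝ)^b * (1 - (2:ℝ)^(-b))⁻¹ := by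
  have hr0 : (0:ℝ) ≤ (2:ℝ)^(-b) := Real.rpow_nonneg (by norm_num) _
  have hr1 : (2:ℝ)^(-b) < 1 :=
    Real.rpow_lt_one_of_one_lt_of_neg (by norm_num) (by linarith)
  have hterm : ∀ m : ℕ, (2:ℝ) ^ (-((m:ℝ)-1)*b) = (2:ℝ)^b * ((2:ℝ)^(-b))^m := by
    intro m
    rw [← Real.rpow_natCast ((2:ℝ)^(-b)) m, ← Real.rpow_mul (by norm_num),
      ← Real.rpow_add (by norm_num)]
    ring_nf
  calc ∑ m ∈ Finset.range N, (2:ℝ) ^ (-((m:ℝ)-1)*b)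
      = (2:ℝ)^b * ∑ m ∈ Finset.range N, ((2:ℝ)^(-b))^m := by
        rw [Finset.mul_sum]; exact Finset.sum_congr rfl fun m _ => hterm m
    _ ≤ (2:ℝ)^b * (1 - (2:ℝ)^(-b))⁻¹ := by
        apply mul_le_mul_of_nonneg_left _ (Real.rpow_nonneg (by norm_num) _)
        have hs := summable_geometric_of_lt_one hr0 hr1
        have h := Summable.sum_le_tsum (Finset.range N) (fun i _ => pow_nonneg hr0 i) hs
        rwa [tsum_geometric_of_lt_one hr0 hr1] at h

private lemma revModBlock_list_bound {d : ℕ} (P : LPPartition d) :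
    ∀ (as : List ℝ), (∀ a ∈ as, 0 < a) →
    ∃ K : ℝ, 0 < K ∧ ∀ (L : List ((Ed d → ℝ) × ℝ)),
      List.Forall₂ (fun a p => 0 ≤ p.2 ∧
          ∀ (n : ℕ) (x : Ed d), |lpBlock P n p.1 x| ≤ p.2 * (2:ℝ)^(-((n:ℝ)-1)*a)) as L →
      ∀ (n : ℕ) (x : Ed d),
        |revModBlock P (L.map Prod.fst) n x| ≤
          K * (2:ℝ)^(-((n:ℝ)-1)*as.headI) * (L.map Prod.snd).prod := by
  intro as
  induction as with
  | nil =>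
    intro _
    refine ⟨1, one_pos, ?_⟩
    rintro L h
    cases h
    simp only [List.map_nil, revModBlock, abs_zero, List.prod_nil, mul_one]
    intro n x
    positivity
  | cons a as ih =>
    intro hpos
    have ha : 0 < a := hpos a List.mem_cons_self
    obtain ⟨K', hK', hbound⟩ := ih (fun b hb => hpos b (List.mem_cons_of_mem _ hb))
    cases as with
    | nil =>
      refine ⟨1, one_pos, ?_⟩
      rintro L (_ | ⟨⟨hM, hb⟩, htail⟩)
      cases htail
      intro n x
      simpa [revModBlock, mul_comm] using hb n x
    | cons b rest =>
      have hb : 0 < b := hpos b (by simp)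
      have hC : 0 < (2:ℝ)^b * (1 - (2:ℝ)^(-b))⁻¹ := by
        have hr1 : (2:ℝ)^(-b) < 1 :=
          Real.rpow_lt_one_of_one_lt_of_neg (by norm_num) (by linarith)
        have h2 := Real.rpow_pos_of_pos (by norm_num : (0:ℝ) < 2) b
        have h3 : (0:ℝ) < 1 - (2:ℝ)^(-b) := by linarith
        positivity
      refine ⟨K' * ((2:ℝ)^b * (1 - (2:ℝ)^(-b))⁻¹), by positivity, ?_⟩
      rintro L (_ | ⟨⟨hMp, hbp⟩, htail⟩)
      rename_i p L'
      obtain ⟨q, L'', rfl⟩ : ∃ q L'', L' = q :: L'' := by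
        cases htail; exact ⟨_, _, rfl⟩
      intro n x
      -- nonnegativity of the tail product
      have hmemnn : ∀ r ∈ q :: L'', (0:ℝ) ≤ r.2 := by
        have : ∀ {as' : List ℝ} {L₀ : List ((Ed d → ℝ) × ℝ)},
            List.Forall₂ (fun a p => 0 ≤ p.2 ∧
              ∀ (n : ℕ) (x : Ed d), |lpBlock P n p.1 x| ≤ p.2 * (2:ℝ)^(-((n:ℝ)-1)*a)) as' L₀ →
            ∀ r ∈ L₀, (0:ℝ) ≤ r.2 := by
          intro as' L₀ h
          induction h with
          | nil => simp
          | cons hr _ ih2 =>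
            intro r hrm
            rcases List.mem_cons.mp hrm with rfl | hrm
            · exact hr.1
            · exact ih2 _ hrm
        exact this htail
      have hprodT : 0 ≤ ((q :: L'').map Prod.snd).prod := by
        apply List.prod_nonneg
        intro r hr
        simp only [List.mem_map] at hr
        obtain ⟨p', hp', rfl⟩ := hr
        exact hmemnn p' hp'
      set C := (2:ℝ)^b * (1 - (2:ℝ)^(-b))⁻¹ with hCdef
      set prodT := ((q :: L'').map Prod.snd).prod with hpT
      have htb := hbound (q :: L'') htail
      have h1 : |∑ m ∈ Finset.range (n-1), revModBlock P ((q :: L'').map Prod.fst) m x|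
          ≤ K' * prodT * C := by
        calc |∑ m ∈ Finset.range (n-1), revModBlock P ((q :: L'').map Prod.fst) m x|
            ≤ ∑ m ∈ Finset.range (n-1), |revModBlock P ((q :: L'').map Prod.fst) m x| :=
              Finset.abs_sum_le_sum_abs _ _
          _ ≤ ∑ m ∈ Finset.range (n-1), K' * (2:ℝ)^(-((m:ℝ)-1)*b) * prodT :=
              Finset.sum_le_sum (fun m _ => by simpa [hpT] using htb m x)
          _ = K' * prodT * ∑ m ∈ Finset.range (n-1), (2:ℝ)^(-((m:ℝ)-1)*b) := by
              rw [Finset.mul_sum]; exact Finset.sum_congr rfl fun m _ => by ring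
          _ ≤ K' * prodT * C :=
              mul_le_mul_of_nonneg_left (geom_block_sum b hb _)
                (mul_nonneg hK'.le hprodT)
      calc |revModBlock P ((p :: q :: L'').map Prod.fst) n x|
          = |∑ m ∈ Finset.range (n-1), revModBlock P ((q :: L'').map Prod.fst) m x| *
              |lpBlock P n p.1 x| := by
            simp [revModBlock, abs_mul]
        _ ≤ (K' * prodT * C) * (p.2 * (2:ℝ)^(-((n:ℝ)-1)*a)) :=
            mul_le_mul h1 (hbp n x) (abs_nonneg _)
              (mul_nonneg (mul_nonneg hK'.le hprodT) hC.le)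
        _ = K' * C * (2:ℝ)^(-((n:ℝ)-1)*((a :: b :: rest).headI)) *
              ((p :: q :: L'').map Prod.snd).prod := by
            simp only [hpT, List.headI, List.map_cons, List.prod_cons]
            ring

/-- Bound for the blocks of the modified iterated products: for `f_i ∈ 𝒞^{α_i}` with
`α_i ∈ (0,1)`, one has `‖(f^{i₁…i_k})_j‖_{L^∞} ≲ 2^{-j α_{i_k}} ∏ ‖f_i‖_{α_i}`, and in
particular the series `f^{i₁…i_k} = ∑_j (f^{i₁…i_k})_j` converges absolutely in `L^∞`. -/
theorem modified_block_bound (d k : ℕ) (P : LPPartition d) (α : Fin (k + 1) → ℝ)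
    (hα : ∀ i, α i ∈ Set.Ioo (0 : ℝ) 1) :
    ∃ K : ℝ, 0 < K ∧
      ∀ (f : Fin (k + 1) → Ed d → ℝ) (M : Fin (k + 1) → ℝ),
        (∀ i, HolderBdd P (α i) (f i) (M i)) →
        (∀ (n : ℕ) (x : Ed d),
            |revModBlock P (List.ofFn f).reverse n x| ≤
              K * (2 : ℝ) ^ (-((n : ℝ) - 1) * α (Fin.last k)) * ∏ i, M i) ∧
        (∀ x : Ed d, Summable fun n : ℕ => |revModBlock P (List.ofFn f).reverse n x|) := by
  obtain ⟨K, hK, hb⟩ := revModBlock_list_bound P ((List.ofFn α).reverse) (by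
    intro a ha
    rw [List.mem_reverse, List.mem_ofFn] at ha
    obtain ⟨i, rfl⟩ := ha
    exact (hα i).1)
  refine ⟨K, hK, ?_⟩
  intro f M hf
  set L : List ((Ed d → ℝ) × ℝ) := (List.ofFn (fun i => (f i, M i))).reverse with hL
  have hmapfst : L.map Prod.fst = (List.ofFn f).reverse := by
    rw [hL, List.map_reverse, List.map_ofFn]; rfl
  have hmapsnd : (L.map Prod.snd).prod = ∏ i, M i := by
    rw [hL, List.map_reverse, List.map_ofFn, List.prod_reverse, List.prod_ofFn]; rfl
  have hhead : ((List.ofFn α).reverse).headI = α (Fin.last k) := by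
    rw [List.ofFn_succ']; simp
  have hMnn : ∀ i, 0 ≤ M i := by
    intro i
    have h := hf i 0 0
    have h2 : (0:ℝ) ≤ (2:ℝ) ^ ((((0:ℕ):ℝ) - 1) * α i) * |lpBlock P 0 (f i) 0| :=
      mul_nonneg (Real.rpow_nonneg (by norm_num) _) (abs_nonneg _)
    linarith
  have hblk : ∀ (i : Fin (k+1)) (n : ℕ) (x : Ed d),
      |lpBlock P n (f i) x| ≤ M i * (2:ℝ)^(-((n:ℝ)-1)*(α i)) := by
    intro i n x
    have h := hf i n x
    have hp : (0:ℝ) < (2:ℝ)^(((n:ℝ)-1)*(α i)) :=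
      Real.rpow_pos_of_pos (by norm_num) _
    rw [neg_mul, Real.rpow_neg (by norm_num), ← div_eq_mul_inv, le_div_iff₀ hp, mul_comm]
    exact h
  have hF2 : List.Forall₂ (fun a p => 0 ≤ p.2 ∧
      ∀ (n : ℕ) (x : Ed d), |lpBlock P n p.1 x| ≤ p.2 * (2:ℝ)^(-((n:ℝ)-1)*a))
      ((List.ofFn α).reverse) L := by
    set T := (List.ofFn (fun i : Fin (k+1) => (α i, f i, M i))).reverse with hT
    have h1 : (List.ofFn α).reverse = T.map (fun t => t.1) := by
      rw [hT, List.map_reverse, List.map_ofFn]; rfl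
    have h2 : L = T.map (fun t => t.2) := by
      rw [hL, hT, List.map_reverse, List.map_ofFn]; rfl
    rw [h1, h2, List.forall₂_map_left_iff, List.forall₂_map_right_iff]
    rw [List.forall₂_same]
    intro t ht
    rw [hT, List.mem_reverse, List.mem_ofFn] at ht
    obtain ⟨i, rfl⟩ := ht
    exact ⟨hMnn i, hblk i⟩
  have hbnd := hb L hF2
  rw [hmapfst, hmapsnd, hhead] at hbnd
  refine ⟨hbnd, ?_⟩
  intro x
  set αl := α (Fin.last k) with hαl
  have hαl0 : 0 < αl := (hα _).1
  have hr0 : (0:ℝ) ≤ (2:ℝ)^(-αl) := Real.rpow_nonneg (by norm_num) _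
  have hr1 : (2:ℝ)^(-αl) < 1 :=
    Real.rpow_lt_one_of_one_lt_of_neg (by norm_num) (by linarith)
  apply Summable.of_nonneg_of_le (fun n => abs_nonneg _) (fun n => hbnd n x)
  have heq : ∀ n : ℕ, K * (2:ℝ)^(-((n:ℝ)-1)*αl) * ∏ i, M i
      = (K * (∏ i, M i) * (2:ℝ)^αl) * ((2:ℝ)^(-αl))^n := by
    intro n
    rw [← Real.rpow_natCast ((2:ℝ)^(-αl)) n, ← Real.rpow_mul (by norm_num : (0:ℝ) ≤ 2),
      show -((n:ℝ)-1)*αl = αl + (-αl * n) by ring, Real.rpow_add (by norm_num)]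
    ring
  rw [show (fun n : ℕ => K * (2:ℝ)^(-((n:ℝ)-1)*αl) * ∏ i, M i)
      = fun n : ℕ => (K * (∏ i, M i) * (2:ℝ)^αl) * ((2:ℝ)^(-αl))^n from funext heq]
  exact (summable_geometric_of_lt_one hr0 hr1).mul_left _
end
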